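/- arXiv:2006.11822 — 4 statements merged into one kernel-verified Lean document; each statement's English description precedes it below -/
import Mathlib

section
/- If p is a purely imaginary octonion, then for all octonions q, r one has [p, pq, r] = -p·[p, q, r]. -/
noncomputable section

open Quaternion

/-- The octonions, via the Cayley–Dickson construction on the quaternions. -/
def Octonion : Type := ℍ[ℝ] × ℍ[ℝ]

namespace Octonion

instance : AddCommGroup Octonion := inferInstanceAs (AddCommGroup (ℍ[ℝ] × ℍ[ℝ]))
instance : Module ℝ Octonion := inferInstanceAs (Module ℝ (ℍ[ℝ] × ℍ[ℝ]))

instance : One Octonion := ⟨((1 : ℍ[ℝ]), (0 : ℍ[ℝ]))⟩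
instance : Mul Octonion :=
  ⟨fun x y => (x.1 * y.1 - star y.2 * x.2, y.2 * x.1 + x.2 * star y.1)⟩
/-- Octonionic conjugation. -/
instance : Star Octonion := ⟨fun x => (star x.1, -x.2)⟩

/-- The associator `[a,b,c] = (ab)c - a(bc)`. -/
def assoc (a b c : Octonion) : Octonion := a * b * c - a * (b * c)

/-- The standard imaginary units `e 0 = e₁, …, e 6 = e₇`. -/
def e : Fin 7 → Octonion
  | 0 => ((⟨0,1,0,0⟩ : ℍ[ℝ]), 0)
  | 1 => ((⟨0,0,1,0⟩ : ℍ[ℝ]), 0)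
  | 2 => ((⟨0,0,0,1⟩ : ℍ[ℝ]), 0)
  | 3 => (0, (1 : ℍ[ℝ]))
  | 4 => (0, (⟨0,1,0,0⟩ : ℍ[ℝ]))
  | 5 => (0, (⟨0,0,1,0⟩ : ℍ[ℝ]))
  | 6 => (0, (⟨0,0,0,1⟩ : ℍ[ℝ]))

end Octonion

/-- A left `𝕆`-module: a real vector space with an `ℝ`-bilinear octonion action
satisfying `1 • m = m` and the alternating rule. -/
structure LeftOModule (M : Type) [AddCommGroup M] [Module ℝ M] where
  smul : Octonion →ₗ[ℝ] M →ₗ[ℝ] M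
  one_smul : ∀ m : M, smul 1 m = m
  alt : ∀ (p q : Octonion) (m : M),
    smul (p * q) m - smul p (smul q m) = -(smul (q * p) m - smul q (smul p m))

/-- An `𝕆`-bimodule: compatible left and right `𝕆`-module structures with
`[p,q,m] = [q,m,p] = [m,p,q]`.  Here `l p m` is `p * m` and `r p m` is `m * p`. -/
structure OBimodule (M : Type) [AddCommGroup M] [Module ℝ M] where
  l : Octonion →ₗ[ℝ] M →ₗ[ℝ] M
  r : Octonion →ₗ[ℝ] M →ₗ[ℝ] M
  one_l : ∀ m : M, l 1 m = m
  one_r : ∀ m : M, r 1 m = m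
  /-- left alternating rule `[p,q,m] = -[q,p,m]` -/
  alt_l : ∀ (p q : Octonion) (m : M),
    l (p * q) m - l p (l q m) = -(l (q * p) m - l q (l p m))
  /-- right alternating rule `[m,p,q] = -[m,q,p]` -/
  alt_r : ∀ (p q : Octonion) (m : M),
    r q (r p m) - r (p * q) m = -(r p (r q m) - r (q * p) m)
  /-- `[p,q,m] = [q,m,p]` -/
  comp_lm : ∀ (p q : Octonion) (m : M),
    l (p * q) m - l p (l q m) = r p (l q m) - l q (r p m)
  /-- `[p,q,m] = [m,p,q]` -/
  comp_rm : ∀ (p q : Octonion) (m : M),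
    l (p * q) m - l p (l q m) = r q (r p m) - r (p * q) m

/-! The identity `[x, yx, z] = x[x, y, z]` holds in every alternative algebra, in particular in
the octonions. For purely imaginary `p` the anticommutator `pq + qp = 2 Re(q) p - 2⟨p, q⟩` lies
in the real span of `1` and `p`, so `[p, pq + qp, r] = 0` by the left alternative law, whence
`[p, pq, r] = -[p, qp, r] = -p[p, q, r]`. -/

namespace Octonion

@[simp] lemma fst_mul (x y : Octonion) : (x * y).1 = x.1 * y.1 - star y.2 * x.2 := rfl
@[simp] lemma snd_mul (x y : Octonion) : (x * y).2 = y.2 * x.1 + x.2 * star y.1 := rfl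
@[simp] lemma fst_add (x y : Octonion) : (x + y).1 = x.1 + y.1 := rfl
@[simp] lemma snd_add (x y : Octonion) : (x + y).2 = x.2 + y.2 := rfl
@[simp] lemma fst_sub (x y : Octonion) : (x - y).1 = x.1 - y.1 := rfl
@[simp] lemma snd_sub (x y : Octonion) : (x - y).2 = x.2 - y.2 := rfl
@[simp] lemma fst_smul (c : ℝ) (x : Octonion) : (c • x).1 = c • x.1 := rfl
@[simp] lemma snd_smul (c : ℝ) (x : Octonion) : (c • x).2 = c • x.2 := rfl
@[simp] lemma fst_zero : (0 : Octonion).1 = 0 := rfl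
@[simp] lemma snd_zero : (0 : Octonion).2 = 0 := rfl
@[simp] lemma fst_one : (1 : Octonion).1 = 1 := rfl
@[simp] lemma snd_one : (1 : Octonion).2 = 0 := rfl

@[ext] lemma ext {x y : Octonion} (h₁ : x.1 = y.1) (h₂ : x.2 = y.2) : x = y := Prod.ext h₁ h₂

protected lemma mul_add (x y z : Octonion) : x * (y + z) = x * y + x * z := by
  ext : 1 <;> simp only [fst_mul, snd_mul, fst_add, snd_add, star_add, mul_add, add_mul] <;> abel

protected lemma add_mul (x y z : Octonion) : (x + y) * z = x * z + y * z := by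
  ext : 1 <;> simp only [fst_mul, snd_mul, fst_add, snd_add, mul_add, add_mul] <;> abel

protected lemma mul_smul (c : ℝ) (x y : Octonion) : x * (c • y) = c • (x * y) := by
  ext : 1 <;> simp [smul_sub, smul_add]

protected lemma smul_mul (c : ℝ) (x y : Octonion) : (c • x) * y = c • (x * y) := by
  ext : 1 <;> simp [smul_sub, smul_add]

protected lemma mul_one (x : Octonion) : x * 1 = x := by
  ext : 1 <;> simp

protected lemma one_mul (x : Octonion) : 1 * x = x := by
  ext : 1 <;> simp

lemma assoc_add_middle (x y y' z : Octonion) :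
    assoc x (y + y') z = assoc x y z + assoc x y' z := by
  simp only [assoc, Octonion.mul_add, Octonion.add_mul]
  abel

lemma assoc_smul_middle (c : ℝ) (x y z : Octonion) : assoc x (c • y) z = c • assoc x y z := by
  simp only [assoc, Octonion.mul_smul, Octonion.smul_mul, smul_sub]

lemma assoc_one_middle (x z : Octonion) : assoc x 1 z = 0 := by
  simp only [assoc, Octonion.mul_one, Octonion.one_mul, sub_self]

lemma assoc_self_self (x z : Octonion) : assoc x x z = 0 := by
  ext <;>
    simp only [assoc, fst_mul, snd_mul, fst_sub, snd_sub, fst_zero, snd_zero,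
      Quaternion.re_mul, Quaternion.imI_mul, Quaternion.imJ_mul, Quaternion.imK_mul,
      Quaternion.re_star, Quaternion.imI_star, Quaternion.imJ_star, Quaternion.imK_star,
      Quaternion.re_add, Quaternion.imI_add, Quaternion.imJ_add, Quaternion.imK_add,
      Quaternion.re_sub, Quaternion.imI_sub, Quaternion.imJ_sub, Quaternion.imK_sub,
      Quaternion.re_zero, Quaternion.imI_zero, Quaternion.imJ_zero, Quaternion.imK_zero] <;>
    ring

set_option maxHeartbeats 1000000 in
lemma assoc_mul_self_middle (x y z : Octonion) : assoc x (y * x) z = x * assoc x y z := by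
  ext <;>
    simp only [assoc, fst_mul, snd_mul, fst_sub, snd_sub,
      Quaternion.re_mul, Quaternion.imI_mul, Quaternion.imJ_mul, Quaternion.imK_mul,
      Quaternion.re_star, Quaternion.imI_star, Quaternion.imJ_star, Quaternion.imK_star,
      Quaternion.re_add, Quaternion.imI_add, Quaternion.imJ_add, Quaternion.imK_add,
      Quaternion.re_sub, Quaternion.imI_sub, Quaternion.imJ_sub, Quaternion.imK_sub] <;>
    ring

lemma exists_mul_add_mul_eq_smul_add_smul_one {p : Octonion} (hp : star p = -p) (q : Octonion) :
    ∃ a b : ℝ, p * q + q * p = a • p + b • 1 := by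
  have hre : p.1.re = 0 := Quaternion.star_eq_neg.1 (congrArg Prod.fst hp)
  refine ⟨2 * q.1.re, (p * q + q * p).1.re, ?_⟩
  ext <;>
    simp only [fst_mul, snd_mul, fst_add, snd_add, fst_smul, snd_smul, fst_one, snd_one,
      Quaternion.re_mul, Quaternion.imI_mul, Quaternion.imJ_mul, Quaternion.imK_mul,
      Quaternion.re_star, Quaternion.imI_star, Quaternion.imJ_star, Quaternion.imK_star,
      Quaternion.re_add, Quaternion.imI_add, Quaternion.imJ_add, Quaternion.imK_add,
      Quaternion.re_sub, Quaternion.imI_sub, Quaternion.imJ_sub, Quaternion.imK_sub,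
      Quaternion.re_smul, Quaternion.imI_smul, Quaternion.imJ_smul, Quaternion.imK_smul,
      Quaternion.re_one, Quaternion.imI_one, Quaternion.imJ_one, Quaternion.imK_one,
      Quaternion.re_zero, Quaternion.imI_zero, Quaternion.imJ_zero, Quaternion.imK_zero,
      smul_eq_mul, hre] <;>
    ring

lemma assoc_mul_add_mul_middle_eq_zero {p : Octonion} (hp : star p = -p) (q r : Octonion) :
    assoc p (p * q + q * p) r = 0 := by
  obtain ⟨a, b, h⟩ := exists_mul_add_mul_eq_smul_add_smul_one hp q
  rw [h, assoc_add_middle, assoc_smul_middle, assoc_smul_middle, assoc_self_self,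
    assoc_one_middle, smul_zero, smul_zero, add_zero]

end Octonion

/-- If `p` is purely imaginary then `[p, pq, r] = -p·[p,q,r]`. -/
theorem octonion_assoc_p_pq_r (p : Octonion) (hp : star p = -p) (q r : Octonion) :
    Octonion.assoc p (p * q) r = -(p * Octonion.assoc p q r) := by
  have h := Octonion.assoc_mul_add_mul_middle_eq_zero hp q r
  rw [Octonion.assoc_add_middle, Octonion.assoc_mul_self_middle] at h
  exact eq_neg_of_add_eq_zero_left h
end
end

section
/- In a left 𝕆-module M, the left-multiplication operators L_{e_i} by the imaginary octonion units satisfy the Clifford relations L_{e_i}L_{e_j} + L_{e_j}L_{e_i} = -2δ_{ij}·Id for 1 ≤ i, j ≤ 7. -/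
noncomputable section

open Quaternion

/-! The alternating rule says precisely that `L_p L_q + L_q L_p = L_{pq + qp}`, so the Clifford
relations are the image of the octonion identities `e_i e_j + e_j e_i = -2 δ_ij`. In the
Cayley–Dickson model, imaginary octonions `x = (a, b)` and `y = (c, d)` satisfy
`xy + yx = -2 (⟪a, c⟫ + ⟪b, d⟫)`, and the units `e_i` are orthonormal for this inner product. -/

open scoped RealInnerProductSpace

theorem Quaternion.star_mul_add_star_mul (a b : ℍ[ℝ]) :
    star a * b + star b * a = ((2 * ⟪a, b⟫ : ℝ) : ℍ[ℝ]) := by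
  ext <;> simp [Quaternion.inner_def] <;> ring

namespace Octonion

theorem mul_add_mul_of_star_eq_neg {x y : Octonion} (hx : star x = -x) (hy : star y = -y) :
    x * y + y * x = (-2 * (⟪x.1, y.1⟫ + ⟪x.2, y.2⟫)) • (1 : Octonion) := by
  obtain ⟨a, b⟩ := x
  obtain ⟨c, d⟩ := y
  have ha : star a = -a := congrArg Prod.fst hx
  have hc : star c = -c := congrArg Prod.fst hy
  refine Prod.ext ?_ ?_
  · change a * c - star d * b + (c * a - star b * d) = (-2 * (⟪a, c⟫ + ⟪b, d⟫)) • (1 : ℍ[ℝ])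
    calc a * c - star d * b + (c * a - star b * d)
        = -(star a * c + star c * a) - (star b * d + star d * b) := by
          rw [ha, hc]; noncomm_ring
      _ = (-2 * (⟪a, c⟫ + ⟪b, d⟫)) • (1 : ℍ[ℝ]) := by
          rw [Quaternion.star_mul_add_star_mul, Quaternion.star_mul_add_star_mul,
            Algebra.smul_def, mul_one]
          push_cast
          noncomm_ring
  · change d * a + b * star c + (b * c + d * star a) = (-2 * (⟪a, c⟫ + ⟪b, d⟫)) • (0 : ℍ[ℝ])
    rw [ha, hc, smul_zero]
    noncomm_ring

theorem star_e (i : Fin 7) : star (e i) = -e i :=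
  Prod.ext (Quaternion.star_eq_neg.2 (by fin_cases i <;> simp [e])) rfl

theorem inner_fst_e_add_inner_snd_e (i j : Fin 7) :
    ⟪(e i).1, (e j).1⟫ + ⟪(e i).2, (e j).2⟫ = if i = j then 1 else 0 := by
  simp only [Quaternion.inner_def, Quaternion.re_mul, Quaternion.re_star, Quaternion.imI_star,
    Quaternion.imJ_star, Quaternion.imK_star]
  fin_cases i <;> fin_cases j <;> simp [e]

theorem e_mul_e_add_e_mul_e (i j : Fin 7) :
    e i * e j + e j * e i = if i = j then (-2 : ℝ) • (1 : Octonion) else 0 := by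
  rw [mul_add_mul_of_star_eq_neg (star_e i) (star_e j), inner_fst_e_add_inner_snd_e]
  split_ifs <;> simp

end Octonion

theorem LeftOModule.smul_smul_add_smul_smul {M : Type} [AddCommGroup M] [Module ℝ M]
    (σ : LeftOModule M) (p q : Octonion) (m : M) :
    σ.smul p (σ.smul q m) + σ.smul q (σ.smul p m) = σ.smul (p * q + q * p) m := by
  rw [map_add, LinearMap.add_apply]
  linear_combination (norm := module) -σ.alt p q m

/-- In a left `𝕆`-module the operators `L_{e_i}` satisfy the Clifford relations
`L_{e_i}L_{e_j} + L_{e_j}L_{e_i} = -2δ_{ij}·Id`. -/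
theorem leftOModule_clifford_relations {M : Type} [AddCommGroup M] [Module ℝ M]
    (σ : LeftOModule M) (i j : Fin 7) (m : M) :
    σ.smul (Octonion.e i) (σ.smul (Octonion.e j) m) +
      σ.smul (Octonion.e j) (σ.smul (Octonion.e i) m) =
    if i = j then (-2 : ℝ) • m else 0 := by
  rw [σ.smul_smul_add_smul_smul, Octonion.e_mul_e_add_e_mul_e]
  split_ifs <;> simp [σ.one_smul]
end
end

section
/- Let M be an 𝕆-bimodule and m an associative element of M. Then pm = mp for every octonion p. -/
noncomputable section

open Quaternion

/-! For an associative element `m`, the `ℝ`-linear map `p ↦ p m - m p` vanishes on `1` and on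
every associator `[p, q, s]`, because `[p, q, s] m` and `m [p, q, s]` both equal the associator
`[q, s, m p]` by the bimodule identities. In `𝕆` the associators together with `1` span
everything: each imaginary unit is half an associator of two others. -/

namespace Octonion

lemma eq_re_smul_one_add_sum_e (x : Octonion) :
    x = x.1.re • (1 : Octonion) + x.1.imI • e 0 + x.1.imJ • e 1 + x.1.imK • e 2
      + x.2.re • e 3 + x.2.imI • e 4 + x.2.imJ • e 5 + x.2.imK • e 6 := by
  ext <;> simp <;> simp [e]

def associators : Set Octonion := {x | ∃ a b c, assoc a b c = x}

lemma assoc_e_eq_two_smul_e :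
    assoc (e 3) (e 1) (e 6) = (2 : ℝ) • e 0 ∧ assoc (e 0) (e 3) (e 6) = (2 : ℝ) • e 1 ∧
    assoc (e 3) (e 0) (e 5) = (2 : ℝ) • e 2 ∧ assoc (e 1) (e 0) (e 6) = (2 : ℝ) • e 3 ∧
    assoc (e 0) (e 1) (e 5) = (2 : ℝ) • e 4 ∧ assoc (e 1) (e 0) (e 4) = (2 : ℝ) • e 5 ∧
    assoc (e 0) (e 1) (e 3) = (2 : ℝ) • e 6 := by
  refine ⟨?_, ?_, ?_, ?_, ?_, ?_, ?_⟩ <;> ext <;>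
    simp only [assoc, fst_sub, snd_sub, fst_mul, snd_mul, fst_smul, snd_smul, re_sub, imI_sub,
      imJ_sub, imK_sub, re_add, imI_add, imJ_add, imK_add, re_mul, imI_mul, imJ_mul, imK_mul,
      re_star, imI_star, imJ_star, imK_star, re_smul, imI_smul, imJ_smul, imK_smul] <;>
    simp [e] <;> norm_num

lemma exists_assoc_eq_two_smul_e (t : Fin 7) : ∃ a b c, assoc a b c = (2 : ℝ) • e t := by
  obtain ⟨h₀, h₁, h₂, h₃, h₄, h₅, h₆⟩ := assoc_e_eq_two_smul_e
  fin_cases t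
  exacts [⟨_, _, _, h₀⟩, ⟨_, _, _, h₁⟩, ⟨_, _, _, h₂⟩, ⟨_, _, _, h₃⟩, ⟨_, _, _, h₄⟩, ⟨_, _, _, h₅⟩,
    ⟨_, _, _, h₆⟩]

lemma e_mem_span_associators (t : Fin 7) : e t ∈ Submodule.span ℝ associators := by
  obtain ⟨a, b, c, h⟩ := exists_assoc_eq_two_smul_e t
  have : e t = (2⁻¹ : ℝ) • assoc a b c := by rw [h, smul_smul]; norm_num
  exact this ▸ Submodule.smul_mem _ _ (Submodule.subset_span ⟨a, b, c, rfl⟩)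

lemma span_insert_one_associators : Submodule.span ℝ (insert 1 associators) = ⊤ := by
  refine Submodule.eq_top_iff'.mpr fun x => ?_
  have h1 : (1 : Octonion) ∈ Submodule.span ℝ (insert 1 associators) :=
    Submodule.subset_span (Set.mem_insert _ _)
  have he (t : Fin 7) : e t ∈ Submodule.span ℝ (insert 1 associators) :=
    Submodule.span_mono (Set.subset_insert _ _) (e_mem_span_associators t)
  rw [eq_re_smul_one_add_sum_e x]
  apply_rules [add_mem, Submodule.smul_mem]

end Octonion

namespace OBimodule

variable {M : Type} [AddCommGroup M] [Module ℝ M]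

def IsAssociative (B : OBimodule M) (m : M) : Prop :=
  ∀ p q : Octonion, B.l (p * q) m = B.l p (B.l q m)

namespace IsAssociative

variable {B : OBimodule M} {m : M}

lemma r_mul (hm : B.IsAssociative m) (p q : Octonion) : B.r (p * q) m = B.r q (B.r p m) := by
  have h := B.comp_rm p q m
  rwa [hm, sub_self, eq_comm, sub_eq_zero, eq_comm] at h

lemma r_l_comm (hm : B.IsAssociative m) (p q : Octonion) : B.r p (B.l q m) = B.l q (B.r p m) := by
  have h := B.comp_lm p q m
  rwa [hm, sub_self, eq_comm, sub_eq_zero] at h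

/-- Both sides equal the associator `[q, s, m p]`. -/
lemma l_assoc_eq_r_assoc (hm : B.IsAssociative m) (p q s : Octonion) :
    B.l (Octonion.assoc p q s) m = B.r (Octonion.assoc p q s) m := by
  have h₁ := B.comp_lm p q (B.l s m)
  rw [← hm q s, ← hm (p * q) s, ← hm p (q * s), hm.r_l_comm p (q * s), hm.r_l_comm p s] at h₁
  have h₂ := B.comp_lm q s (B.r p m)
  have h₃ := h₂.symm.trans (B.comp_rm q s (B.r p m))
  rw [← hm.r_mul p q] at h₂ h₃
  rw [← hm.r_mul (p * q) s, ← hm.r_mul p (q * s)] at h₃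
  simpa only [Octonion.assoc, map_sub, LinearMap.sub_apply] using h₁.trans (h₂.trans h₃)

end IsAssociative

end OBimodule

/-- An associative element of an `𝕆`-bimodule commutes with every octonion. -/
theorem bimodule_assoc_elt_central {M : Type} [AddCommGroup M] [Module ℝ M]
    (B : OBimodule M) (m : M)
    (hm : ∀ p q : Octonion, B.l (p * q) m = B.l p (B.l q m)) :
    ∀ p : Octonion, B.l p m = B.r p m := by
  have h : B.l.flip m = B.r.flip m := by
    refine LinearMap.ext_on Octonion.span_insert_one_associators ?_
    rintro _ (rfl | ⟨a, b, c, rfl⟩)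
    · simp only [LinearMap.flip_apply, B.one_l, B.one_r]
    · exact OBimodule.IsAssociative.l_assoc_eq_r_assoc hm a b c
  exact fun p => LinearMap.congr_fun h p
end
end

section
/- Let M be an 𝕆-bimodule and m ∈ M a conjugate associative element, meaning (pq)m = q(pm) and (mp)q = m(qp) for all p,q ∈ 𝕆. Then for every purely imaginary octonion b, mb = -bm, i.e., mb = b̄m. -/
noncomputable section

open Quaternion

/-!
Conjugate associativity turns the identity `[p,q,m] = [m,p,q]` into `(pq - qp)m + m(pq - qp) = 0`.
This is linear in the octonion, and the purely imaginary octonions are spanned by commutators: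
in Cayley–Dickson coordinates `(x, 0) = ½[(0, 1), (0, x)]` for imaginary `x`, and
`(0, y) = ½[(u, 0), (0, -yu)]` for any imaginary unit quaternion `u`.
-/

namespace Octonion

def mk (a b : ℍ[ℝ]) : Octonion := (a, b)

theorem mk_inj {a b c d : ℍ[ℝ]} : mk a b = mk c d ↔ a = c ∧ b = d := Prod.mk_inj

theorem mk_mul_mk (a b c d : ℍ[ℝ]) :
    mk a b * mk c d = mk (a * c - star d * b) (d * a + b * star c) := rfl

theorem mk_add_mk (a b c d : ℍ[ℝ]) : mk a b + mk c d = mk (a + c) (b + d) := rfl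

theorem mk_sub_mk (a b c d : ℍ[ℝ]) : mk a b - mk c d = mk (a - c) (b - d) := rfl

theorem smul_mk (r : ℝ) (a b : ℍ[ℝ]) : r • mk a b = mk (r • a) (r • b) := rfl

theorem mk_fst_snd (x : Octonion) : mk x.1 x.2 = x := rfl

theorem star_mk (a b : ℍ[ℝ]) : star (mk a b) = mk (star a) (-b) := rfl

theorem neg_mk (a b : ℍ[ℝ]) : -mk a b = mk (-a) (-b) := rfl

theorem mk_zero_eq_half_commutator {x : ℍ[ℝ]} (hx : star x = -x) :
    mk x 0 = (1 / 2 : ℝ) • (mk 0 1 * mk 0 x - mk 0 x * mk 0 1) := by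
  simp only [mk_mul_mk, mk_sub_mk, smul_mk, hx, mk_inj]
  constructor
  · simp
    module
  · simp

theorem zero_mk_eq_half_commutator {u : ℍ[ℝ]} (hu : star u = -u) (hu2 : u * u = -1) (y : ℍ[ℝ]) :
    mk 0 y = (1 / 2 : ℝ) • (mk u 0 * mk 0 (-y * u) - mk 0 (-y * u) * mk u 0) := by
  simp only [mk_mul_mk, mk_sub_mk, smul_mk, mk_inj, hu]
  constructor
  · simp
  · simp only [mul_zero, star_zero, add_zero, zero_add, neg_mul, mul_neg, neg_neg, mul_assoc, hu2, mul_one]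
    module

def commutatorSpan : Submodule ℝ Octonion :=
  Submodule.span ℝ (Set.range fun pq : Octonion × Octonion => pq.1 * pq.2 - pq.2 * pq.1)

theorem commutator_mem_commutatorSpan (p q : Octonion) : p * q - q * p ∈ commutatorSpan :=
  Submodule.subset_span ⟨(p, q), rfl⟩

theorem mem_commutatorSpan_of_star_eq_neg {b : Octonion} (hb : star b = -b) :
    b ∈ commutatorSpan := by
  rw [← mk_fst_snd b, star_mk, neg_mk, mk_inj] at hb
  have hi : star (⟨0, 1, 0, 0⟩ : ℍ[ℝ]) = -⟨0, 1, 0, 0⟩ := by ext <;> simp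
  have hi2 : (⟨0, 1, 0, 0⟩ : ℍ[ℝ]) * ⟨0, 1, 0, 0⟩ = -1 := by ext <;> simp
  rw [← mk_fst_snd b, ← add_zero b.1, ← zero_add b.2, ← mk_add_mk,
    zero_mk_eq_half_commutator hi hi2 b.2, mk_zero_eq_half_commutator hb.1]
  exact add_mem (Submodule.smul_mem _ _ (commutator_mem_commutatorSpan _ _))
    (Submodule.smul_mem _ _ (commutator_mem_commutatorSpan _ _))

end Octonion

namespace OBimodule

variable {M : Type} [AddCommGroup M] [Module ℝ M] (B : OBimodule M) {m : M}

theorem l_add_r_commutator_eq_zero (h1 : ∀ p q : Octonion, B.l (p * q) m = B.l q (B.l p m))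
    (h2 : ∀ p q : Octonion, B.r q (B.r p m) = B.r (q * p) m) (p q : Octonion) :
    B.l (p * q - q * p) m + B.r (p * q - q * p) m = 0 := by
  have h := B.comp_rm p q m
  rw [← h1 q p, h2 p q] at h
  simp only [map_sub, LinearMap.sub_apply, h]
  abel

theorem l_add_r_eq_zero_of_mem_commutatorSpan
    (h1 : ∀ p q : Octonion, B.l (p * q) m = B.l q (B.l p m))
    (h2 : ∀ p q : Octonion, B.r q (B.r p m) = B.r (q * p) m) {c : Octonion}
    (hc : c ∈ Octonion.commutatorSpan) : B.l c m + B.r c m = 0 := by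
  have hker : Octonion.commutatorSpan ≤ LinearMap.ker (B.l.flip m + B.r.flip m) := by
    refine Submodule.span_le.2 ?_
    rintro _ ⟨⟨p, q⟩, rfl⟩
    exact B.l_add_r_commutator_eq_zero h1 h2 p q
  exact hker hc

end OBimodule

/-- For a conjugate associative element `m` of an `𝕆`-bimodule and purely
imaginary `b`, one has `mb = -bm`, i.e. `mb = b̄m`. -/
theorem bimodule_conjAssoc_anticomm {M : Type} [AddCommGroup M] [Module ℝ M]
    (B : OBimodule M) (m : M)
    (h1 : ∀ p q : Octonion, B.l (p * q) m = B.l q (B.l p m))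
    (h2 : ∀ p q : Octonion, B.r q (B.r p m) = B.r (q * p) m)
    (b : Octonion) (hb : star b = -b) :
    B.r b m = -(B.l b m) ∧ B.r b m = B.l (star b) m := by
  have hrl : B.r b m = -(B.l b m) := eq_neg_of_add_eq_zero_right
    (B.l_add_r_eq_zero_of_mem_commutatorSpan h1 h2 (Octonion.mem_commutatorSpan_of_star_eq_neg hb))
  exact ⟨hrl, by rw [hb, map_neg, LinearMap.neg_apply, hrl]⟩
end
end
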